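/- Under the hypotheses of the path-kernel representation, if moreover for each i the path kernel P_i = ∫_0^T K_{w(t)}(x, x_i) dt is nonzero, then f(w(T),x) = ∑_{i=1}^m a_i P_i + b, where a_i = -(∫_0^T ℓ'(y_i, f(w(t),x_i)) K_{w(t)}(x,x_i) dt) / P_i is the kernel-weighted average loss derivative and b = f(w(0), x). -/

import Mathlib

/-!
Along the gradient flow, the chain rule gives
`d/dt f(w t, xq) = ⟪∇f(w t, xq), -∇L(w t)⟫ = -∑ i, ℓ'(y i, f(w t, x i)) K_{w t}(xq, x i)`;
integrating over `[0, T]` yields `f(w T, xq) - f(w 0, xq) = -∑ i, ∫ ℓ' K`, and each term equals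
`a i * P i` because `P i ≠ 0`.
-/

open scoped BigOperators

section GradientFlow

variable {E : Type*} [NormedAddCommGroup E] [InnerProductSpace ℝ E] [CompleteSpace E]

theorem ContDiff.continuous_gradient {g : E → ℝ} (hg : ContDiff ℝ 1 g) :
    Continuous (gradient g) :=
  (InnerProductSpace.toDual ℝ E).symm.continuous.comp (hg.continuous_fderiv one_ne_zero)

theorem HasGradientAt.hasDerivAt_comp {g : E → ℝ} {g' : E} {w : ℝ → E} {w' : E} {t : ℝ}
    (hg : HasGradientAt g g' (w t)) (hw : HasDerivAt w w' t) :
    HasDerivAt (fun s => g (w s)) (inner ℝ g' w') t := by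
  simpa only [Function.comp_def, InnerProductSpace.toDual_apply_apply] using
    hg.hasFDerivAt.comp_hasDerivAt t hw

theorem hasGradientAt_sum_comp {ι : Type*} [Fintype ι] {F : ι → E → ℝ} {φ φ' : ι → ℝ → ℝ}
    (hφ : ∀ i b, HasDerivAt (φ i) (φ' i b) b) {v : E} (hF : ∀ i, DifferentiableAt ℝ (F i) v) :
    HasGradientAt (fun u => ∑ i, φ i (F i u)) (∑ i, φ' i (F i v) • gradient (F i) v) v := by
  rw [hasGradientAt_iff_hasFDerivAt, map_sum]
  refine HasFDerivAt.fun_sum fun i _ => ?_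
  rw [map_smul]
  exact (hφ i (F i v)).comp_hasFDerivAt v (hF i).hasGradientAt.hasFDerivAt

variable {X : Type*}

noncomputable def tangentKernel (f : E → X → ℝ) (v : E) (x x' : X) : ℝ :=
  inner ℝ (gradient (fun u => f u x) v) (gradient (fun u => f u x') v)

theorem continuous_tangentKernel {f : E → X → ℝ} (hf : ∀ x, ContDiff ℝ 1 (fun v => f v x))
    (x x' : X) : Continuous (fun v => tangentKernel f v x x') :=
  (hf x).continuous_gradient.inner (hf x').continuous_gradient

theorem path_kernel_representation {ι : Type*} [Fintype ι] {f : E → X → ℝ}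
    (hf : ∀ x, ContDiff ℝ 1 (fun v => f v x)) {ℓ ℓ' : ℝ → ℝ → ℝ}
    (hℓ : ∀ a b, HasDerivAt (fun y => ℓ a y) (ℓ' a b) b) (hℓ' : ∀ a, Continuous (ℓ' a))
    {x : ι → X} {y : ι → ℝ} {T : ℝ} (hT : 0 ≤ T) {w : ℝ → E}
    (hw : ∀ t ∈ Set.Icc (0 : ℝ) T,
      HasDerivAt w (-gradient (fun v => ∑ i, ℓ (y i) (f v (x i))) (w t)) t)
    (xq : X) :
    f (w T) xq =
      -(∑ i, ∫ t in (0 : ℝ)..T, ℓ' (y i) (f (w t) (x i)) * tangentKernel f (w t) xq (x i))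
        + f (w 0) xq := by
  rw [← Set.uIcc_of_le hT] at hw
  have hderiv : ∀ t ∈ Set.uIcc (0 : ℝ) T, HasDerivAt (fun s => f (w s) xq)
      (-∑ i, ℓ' (y i) (f (w t) (x i)) * tangentKernel f (w t) xq (x i)) t := by
    intro t ht
    have hgrad := hasGradientAt_sum_comp (F := fun i v => f v (x i)) (fun i => hℓ (y i))
      (v := w t) fun i => (hf (x i)).differentiable one_ne_zero _
    convert ((hf xq).differentiable one_ne_zero (w t)).hasGradientAt.hasDerivAt_comp (hw t ht)
      using 1
    rw [hgrad.gradient, inner_neg_right, inner_sum]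
    simp only [real_inner_smul_right, tangentKernel]
  have hwc : ContinuousOn w (Set.uIcc 0 T) := fun t ht => (hw t ht).continuousAt.continuousWithinAt
  have hcont : ∀ i, ContinuousOn
      (fun t => ℓ' (y i) (f (w t) (x i)) * tangentKernel f (w t) xq (x i)) (Set.uIcc 0 T) :=
    fun i => ((hℓ' (y i)).comp (hf (x i)).continuous |>.comp_continuousOn hwc).mul
      ((continuous_tangentKernel hf xq (x i)).comp_continuousOn hwc)
  have hFTC := intervalIntegral.integral_eq_sub_of_hasDerivAt hderiv
    (continuousOn_finsetSum _ (fun i _ => hcont i)).neg.intervalIntegrable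
  rw [intervalIntegral.integral_neg,
    intervalIntegral.integral_finsetSum fun i _ => (hcont i).intervalIntegrable] at hFTC
  linarith

end GradientFlow

theorem kernel_machine_form_general (d n m : ℕ)
    (f : EuclideanSpace ℝ (Fin d) → EuclideanSpace ℝ (Fin n) → ℝ)
    (hf : ∀ x, ContDiff ℝ 1 (fun w => f w x))
    (ℓ ℓ' : ℝ → ℝ → ℝ)
    (hℓ : ∀ a b, HasDerivAt (fun y => ℓ a y) (ℓ' a b) b)
    (hℓ' : ∀ a, Continuous (ℓ' a))
    (x : Fin m → EuclideanSpace ℝ (Fin n)) (y : Fin m → ℝ)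
    (L : EuclideanSpace ℝ (Fin d) → ℝ)
    (hL : L = fun v => ∑ i, ℓ (y i) (f v (x i)))
    (T : ℝ) (hT : 0 ≤ T)
    (w : ℝ → EuclideanSpace ℝ (Fin d))
    (hw : ∀ t ∈ Set.Icc (0 : ℝ) T, HasDerivAt w (-(gradient L (w t))) t)
    (xq : EuclideanSpace ℝ (Fin n))
    (P : Fin m → ℝ)
    (hPne : ∀ i, P i ≠ 0) :
    f (w T) xq =
      ∑ i, (-(∫ t in (0 : ℝ)..T, ℓ' (y i) (f (w t) (x i)) *
          (inner ℝ (gradient (fun v => f v xq) (w t))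
                 (gradient (fun v => f v (x i)) (w t)) : ℝ)) / P i) * P i
        + f (w 0) xq := by
  subst hL
  rw [Finset.sum_congr rfl fun i _ => div_mul_cancel₀ _ (hPne i), Finset.sum_neg_distrib]
  exact path_kernel_representation hf hℓ hℓ' hT hw xq

theorem kernel_machine_form (d n m : ℕ)
    (f : EuclideanSpace ℝ (Fin d) → EuclideanSpace ℝ (Fin n) → ℝ)
    (hf : ∀ x, ContDiff ℝ 1 (fun w => f w x))
    (ℓ ℓ' : ℝ → ℝ → ℝ)
    (hℓ : ∀ a b, HasDerivAt (fun y => ℓ a y) (ℓ' a b) b)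
    (hℓ' : ∀ a, Continuous (ℓ' a))
    (x : Fin m → EuclideanSpace ℝ (Fin n)) (y : Fin m → ℝ)
    (L : EuclideanSpace ℝ (Fin d) → ℝ)
    (hL : L = fun v => ∑ i, ℓ (y i) (f v (x i)))
    (T : ℝ) (hT : 0 ≤ T)
    (w : ℝ → EuclideanSpace ℝ (Fin d))
    (hw : ∀ t ∈ Set.Icc (0 : ℝ) T, HasDerivAt w (-(gradient L (w t))) t)
    (xq : EuclideanSpace ℝ (Fin n))
    (P : Fin m → ℝ)
    (hP : P = fun i => ∫ t in (0 : ℝ)..T,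
      (inner ℝ (gradient (fun v => f v xq) (w t))
             (gradient (fun v => f v (x i)) (w t)) : ℝ))
    (hPne : ∀ i, P i ≠ 0) :
    f (w T) xq =
      ∑ i, (-(∫ t in (0 : ℝ)..T, ℓ' (y i) (f (w t) (x i)) *
          (inner ℝ (gradient (fun v => f v xq) (w t))
                 (gradient (fun v => f v (x i)) (w t)) : ℝ)) / P i) * P i
        + f (w 0) xq :=
  kernel_machine_form_general d n m f hf ℓ ℓ' hℓ hℓ' x y L hL T hT w hw xq P hPne
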